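/- arXiv:2312.13379 — 2 statements merged into one kernel-verified Lean document; each statement's English description precedes it below -/
import Mathlib

section
/- Let d ∈ ℕ, M > 0, y ∈ ℝ^d, and let x ∈ ℝ^d satisfy |x_j − y_j| ≤ 1/(2dM) for all j. Then λ²_{M,y_j}(x_j) ≥ 1 − 4/(3√3 d) for each j, Δ_{M,y}(x) ≥ 1 − 4/(3√3), and ϑ_{M,y}(x) ≥ (2/81)(9 − 4√3)². -/
/-! Writing `u = M²(x_j - y_j)² ≤ 1/(4d²)`, each factor is `(1 - u)² ≥ 1 - 2u ≥ 1 - 1/(2d²)`,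
which is at least `1 - 4/(3√3 d)`. Summing over the `d` coordinates gives
`Δ ≥ 1 - 4/(3√3) = (9 - 4√3)/9`, a number in `[0, 1/2]`, where `θ t = 2t²`; since `θ` is
non-decreasing, `θ(Δ) ≥ 2 ((9 - 4√3)/9)²`. -/

noncomputable def requ (x : ℝ) : ℝ := max 0 x ^ 2

noncomputable def theta (x : ℝ) : ℝ := 2 * (requ x - 2 * requ (x - 1/2) + requ (x - 1))

noncomputable def bump (M y x : ℝ) : ℝ :=
  if |x - y| ≤ 1 / M then (1 - M ^ 2 * (x - y) ^ 2) ^ 2 else 0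

lemma two_mul_sq_le_theta {c t : ℝ} (hc₀ : 0 ≤ c) (hc : c ≤ 1 / 2) (hct : c ≤ t) :
    2 * c ^ 2 ≤ theta t := by
  unfold theta requ
  rcases le_or_gt t (1 / 2) with h₁ | h₁
  · rw [max_eq_right (by linarith), max_eq_left (by linarith), max_eq_left (by linarith)]
    nlinarith
  rcases le_or_gt t 1 with h₂ | h₂
  · rw [max_eq_right (by linarith), max_eq_right (by linarith), max_eq_left (by linarith)]
    nlinarith
  · rw [max_eq_right (by linarith), max_eq_right (by linarith), max_eq_right (by linarith)]
    nlinarith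

lemma one_sub_two_mul_sq_le_bump {M y x δ : ℝ} (hM : 0 < M) (hδ : δ ≤ 1)
    (h : M * |x - y| ≤ δ) : 1 - 2 * δ ^ 2 ≤ bump M y x := by
  have hu : M ^ 2 * (x - y) ^ 2 ≤ δ ^ 2 := by
    rw [← sq_abs (x - y), ← mul_pow]
    exact pow_le_pow_left₀ (by positivity) h 2
  have hin : |x - y| ≤ 1 / M := by
    rw [le_div_iff₀ hM, mul_comm]
    linarith
  rw [bump, if_pos hin]
  nlinarith [sq_nonneg (M ^ 2 * (x - y) ^ 2)]

lemma one_sub_card_mul_le_sum_sub {ι : Type*} [Fintype ι] {f : ι → ℝ} {η : ℝ}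
    (h : ∀ j, 1 - η ≤ f j) :
    1 - Fintype.card ι * η ≤ ∑ j, f j - (Fintype.card ι - 1) := by
  have := Finset.sum_le_sum fun j (_ : j ∈ Finset.univ) => h j
  simp only [Finset.sum_const, Finset.card_univ, nsmul_eq_mul] at this
  linarith

lemma three_div_two_le_sqrt_three : 3 / 2 ≤ √3 :=
  Real.le_sqrt_of_sq_le (by norm_num)

lemma sqrt_three_le_two : √3 ≤ 2 :=
  Real.sqrt_le_iff.mpr ⟨by norm_num, by norm_num⟩

lemma one_sub_four_div_three_mul_sqrt_three : 1 - 4 / (3 * √3) = (9 - 4 * √3) / 9 := by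
  have h := Real.sq_sqrt (show (0 : ℝ) ≤ 3 by norm_num)
  have : √3 ≠ 0 := by positivity
  field_simp
  linear_combination 12 * h

lemma one_sub_four_div_le_bump {M y x d : ℝ} (hM : 0 < M) (hd : 1 ≤ d)
    (h : |x - y| ≤ 1 / (2 * d * M)) : 1 - 4 / (3 * √3 * d) ≤ bump M y x := by
  have hMx : M * |x - y| ≤ 1 / (2 * d) := by
    rw [le_div_iff₀ (by positivity)] at h ⊢
    linarith
  have hδ : 1 / (2 * d) ≤ 1 := by
    rw [div_le_one (by positivity)]
    linarith
  have hconst : 2 * (1 / (2 * d)) ^ 2 ≤ 4 / (3 * √3 * d) :=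
    calc 2 * (1 / (2 * d)) ^ 2 = 4 / (8 * d ^ 2) := by field_simp; ring
      _ ≤ 4 / (3 * √3 * d) :=
        div_le_div_of_nonneg_left (by norm_num) (by positivity) (by nlinarith [sqrt_three_le_two])
  linarith [one_sub_two_mul_sq_le_bump hM hδ hMx]

lemma natCast_mul_div_mul_le (d : ℕ) {a b : ℝ} (ha : 0 ≤ a) (hb : 0 ≤ b) :
    d * (a / (b * d)) ≤ a / b := by
  rcases Nat.eq_zero_or_pos d with rfl | hd
  · simpa using div_nonneg ha hb
  · have : (d : ℝ) ≠ 0 := by positivity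
    exact le_of_eq (by field_simp)

theorem stmt7_general (d : ℕ) (M : ℝ) (hM : 0 < M) (y x : Fin d → ℝ)
    (hx : ∀ j, |x j - y j| ≤ 1 / (2 * d * M)) :
    (∀ j, 1 - 4 / (3 * Real.sqrt 3 * d) ≤ bump M (y j) (x j)) ∧
    (1 - 4 / (3 * Real.sqrt 3) ≤ (∑ j, bump M (y j) (x j)) - ((d : ℝ) - 1)) ∧
    ((2/81) * (9 - 4 * Real.sqrt 3)^2
      ≤ theta ((∑ j, bump M (y j) (x j)) - ((d : ℝ) - 1))) := by
  have hcoord : ∀ j, 1 - 4 / (3 * √3 * d) ≤ bump M (y j) (x j) := fun j =>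
    one_sub_four_div_le_bump hM (by exact_mod_cast j.pos) (hx j)
  have hsum : 1 - 4 / (3 * √3) ≤ ∑ j, bump M (y j) (x j) - (d - 1) := by
    have := one_sub_card_mul_le_sum_sub hcoord
    rw [Fintype.card_fin] at this
    linarith [natCast_mul_div_mul_le d (a := 4) (b := 3 * √3) (by norm_num) (by positivity)]
  refine ⟨hcoord, hsum, ?_⟩
  have key := two_mul_sq_le_theta (c := (9 - 4 * √3) / 9)
    (by linarith [sqrt_three_le_two]) (by linarith [three_div_two_le_sqrt_three])
    (one_sub_four_div_three_mul_sqrt_three.symm.trans_le hsum)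
  linarith

theorem stmt7 (d : ℕ) (hd : 0 < d) (M : ℝ) (hM : 0 < M) (y x : Fin d → ℝ)
    (hx : ∀ j, |x j - y j| ≤ 1 / (2 * d * M)) :
    (∀ j, 1 - 4 / (3 * Real.sqrt 3 * d) ≤ bump M (y j) (x j)) ∧
    (1 - 4 / (3 * Real.sqrt 3) ≤ (∑ j, bump M (y j) (x j)) - ((d : ℝ) - 1)) ∧
    ((2/81) * (9 - 4 * Real.sqrt 3)^2
      ≤ theta ((∑ j, bump M (y j) (x j)) - ((d : ℝ) - 1))) :=
  stmt7_general d M hM y x hx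
end

section
/- Let F be the realization of a ReQU neural network with input dimension d, output dimension 1, at most n nonzero weights, at most L layers, and all weights and biases of magnitude at most C ≥ 1. Then F restricted to [0,1]^d is Lipschitz with respect to the ℓ¹ norm with Lipschitz constant at most 2^{2^L+L−3}·d^{(2^{L−1}−1)/2}·C^{2^L−1}·n^{(2^L−1)/2}, and Lipschitz with respect to the ℓ^∞ norm with constant at most d times that bound. -/
/-- The hiddenLayers-layer outputs ρ₂∘T_k ∘ ⋯ ∘ ρ₂∘T_1 of a ReQU network. -/
noncomputable def hiddenLayers (Nd : ℕ → ℕ)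
    (A : (ℓ : ℕ) → Matrix (Fin (Nd (ℓ + 1))) (Fin (Nd ℓ)) ℝ)
    (b : (ℓ : ℕ) → Fin (Nd (ℓ + 1)) → ℝ) :
    (k : ℕ) → (Fin (Nd 0) → ℝ) → Fin (Nd k) → ℝ
  | 0, x => x
  | (k + 1), x => fun i => requ ((A k).mulVec (hiddenLayers Nd A b k x) i + b k i)

/-- The realization T_{L'+1} ∘ (ρ₂∘T_{L'}) ∘ ⋯ ∘ (ρ₂∘T_1) of a ReQU network
with L'+1 layers. -/
noncomputable def realize (Nd : ℕ → ℕ)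
    (A : (ℓ : ℕ) → Matrix (Fin (Nd (ℓ + 1))) (Fin (Nd ℓ)) ℝ)
    (b : (ℓ : ℕ) → Fin (Nd (ℓ + 1)) → ℝ)
    (L' : ℕ) (x : Fin (Nd 0) → ℝ) : Fin (Nd (L' + 1)) → ℝ :=
  fun i => (A L').mulVec (hiddenLayers Nd A b L' x) i + b L' i

open Finset Matrix

section Layer

variable {ι κ : Type*} [Fintype ι] [Fintype κ] {C : ℝ}

lemma sum_sq_le_of_abs_le {v : ι → ℝ} (hv : ∀ i, |v i| ≤ C) :
    ∑ i, v i ^ 2 ≤ C ^ 2 * #{i | v i ≠ 0} := by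
  calc ∑ i, v i ^ 2 = ∑ i with v i ≠ 0, v i ^ 2 :=
        (sum_filter_of_ne fun i _ hi hvi => by simp [hvi] at hi).symm
    _ ≤ ∑ i with v i ≠ 0, C ^ 2 :=
        sum_le_sum fun i _ => sq_le_sq.2 ((hv i).trans (le_abs_self C))
    _ = C ^ 2 * #{i | v i ≠ 0} := by rw [sum_const, nsmul_eq_mul, mul_comm]

lemma sum_sq_mulVec_le {M : Matrix ι κ ℝ} (hM : ∀ i j, |M i j| ≤ C) (v : κ → ℝ) :
    ∑ i, (M *ᵥ v) i ^ 2 ≤ C ^ 2 * #{p : ι × κ | M p.1 p.2 ≠ 0} * ∑ j, v j ^ 2 := by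
  have hrow (i : ι) : (M *ᵥ v) i ^ 2 ≤ (∑ j, M i j ^ 2) * ∑ j, v j ^ 2 :=
    sum_mul_sq_le_sq_mul_sq _ _ _
  calc ∑ i, (M *ᵥ v) i ^ 2 ≤ ∑ i, (∑ j, M i j ^ 2) * ∑ j, v j ^ 2 := sum_le_sum fun i _ => hrow i
    _ = (∑ p : ι × κ, M p.1 p.2 ^ 2) * ∑ j, v j ^ 2 := by rw [← sum_mul, Fintype.sum_prod_type]
    _ ≤ C ^ 2 * #{p : ι × κ | M p.1 p.2 ≠ 0} * ∑ j, v j ^ 2 := by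
        gcongr
        exact sum_sq_le_of_abs_le fun p => hM p.1 p.2

lemma sum_sq_mulVec_le_of_card_le {M : Matrix ι κ ℝ} (hM : ∀ i j, |M i j| ≤ C) {n : ℕ}
    (hn : #{p : ι × κ | M p.1 p.2 ≠ 0} ≤ n) (v : κ → ℝ) :
    ∑ i, (M *ᵥ v) i ^ 2 ≤ C ^ 2 * n * ∑ j, v j ^ 2 :=
  (sum_sq_mulVec_le hM v).trans (by gcongr)

lemma sum_sq_mulVec_add_le {M : Matrix ι κ ℝ} {c : ι → ℝ} (hM : ∀ i j, |M i j| ≤ C)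
    (hc : ∀ i, |c i| ≤ C) {n : ℕ}
    (hn : #{p : ι × κ | M p.1 p.2 ≠ 0} + #{i | c i ≠ 0} ≤ n)
    {v : κ → ℝ} {S : ℝ} (hS : 1 ≤ S) (hv : ∑ j, v j ^ 2 ≤ S) :
    ∑ i, ((M *ᵥ v) i + c i) ^ 2 ≤ 2 * C ^ 2 * n * S := by
  have hn' : (#{p : ι × κ | M p.1 p.2 ≠ 0} : ℝ) + #{i | c i ≠ 0} ≤ n := by exact_mod_cast hn
  have hMv := (sum_sq_mulVec_le hM v).trans (mul_le_mul_of_nonneg_left hv (by positivity))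
  have hc2 := sum_sq_le_of_abs_le hc
  calc ∑ i, ((M *ᵥ v) i + c i) ^ 2 ≤ ∑ i, (2 * (M *ᵥ v) i ^ 2 + 2 * c i ^ 2) :=
        sum_le_sum fun i _ => by nlinarith [sq_nonneg ((M *ᵥ v) i - c i)]
    _ = 2 * ∑ i, (M *ᵥ v) i ^ 2 + 2 * ∑ i, c i ^ 2 := by
        rw [sum_add_distrib, mul_sum, mul_sum]
    _ ≤ 2 * (C ^ 2 * #{p : ι × κ | M p.1 p.2 ≠ 0} * S) + 2 * (C ^ 2 * #{i | c i ≠ 0} * S) := by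
        gcongr
        exact hc2.trans (le_mul_of_one_le_right (by positivity) hS)
    _ = 2 * C ^ 2 * ((#{p : ι × κ | M p.1 p.2 ≠ 0} + #{i | c i ≠ 0}) * S) := by ring
    _ ≤ 2 * C ^ 2 * n * S := by
        rw [mul_assoc _ (n : ℝ)]
        gcongr

end Layer

section ReQU

variable {ι : Type*} [Fintype ι]

lemma abs_requ_sub_requ_le (a c : ℝ) : |requ a - requ c| ≤ (|a| + |c|) * |a - c| := by
  have hmax : |max 0 a - max 0 c| ≤ |a - c| := by
    rw [max_comm 0 a, max_comm 0 c]
    exact abs_max_sub_max_le_abs a c 0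
  calc |requ a - requ c| = (max 0 a + max 0 c) * |max 0 a - max 0 c| := by
        rw [requ, requ, sq_sub_sq, abs_mul, abs_of_nonneg (by positivity)]
    _ ≤ (|a| + |c|) * |a - c| := by
        gcongr <;> simp [le_abs_self]

lemma sq_requ_sub_requ_le (a c : ℝ) : (requ a - requ c) ^ 2 ≤ 2 * (a ^ 2 + c ^ 2) * (a - c) ^ 2 := by
  calc (requ a - requ c) ^ 2 ≤ ((|a| + |c|) * |a - c|) ^ 2 := by
        rw [← sq_abs]
        gcongr
        exact abs_requ_sub_requ_le a c
    _ = (|a| + |c|) ^ 2 * (a - c) ^ 2 := by rw [mul_pow, sq_abs]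
    _ ≤ 2 * (a ^ 2 + c ^ 2) * (a - c) ^ 2 := by
        gcongr
        nlinarith [sq_abs a, sq_abs c, sq_nonneg (|a| - |c|)]

lemma requ_le_sq (a : ℝ) : requ a ≤ a ^ 2 := by
  rcases le_total a 0 with h | h <;> simp [requ, h, sq_nonneg]

lemma sum_sq_requ_le (z : ι → ℝ) : ∑ i, requ (z i) ^ 2 ≤ (∑ i, z i ^ 2) ^ 2 := by
  calc ∑ i, requ (z i) ^ 2 ≤ ∑ i, (z i ^ 2) ^ 2 :=
        sum_le_sum fun i _ => pow_le_pow_left₀ (sq_nonneg _) (requ_le_sq _) 2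
    _ ≤ (∑ i, z i ^ 2) ^ 2 := sum_sq_le_sq_sum_of_nonneg fun i _ => sq_nonneg _

lemma sum_sq_requ_sub_requ_le {z w : ι → ℝ} {R : ℝ} (hz : ∑ i, z i ^ 2 ≤ R)
    (hw : ∑ i, w i ^ 2 ≤ R) :
    ∑ i, (requ (z i) - requ (w i)) ^ 2 ≤ 4 * R * ∑ i, (z i - w i) ^ 2 := by
  have hpt {u : ι → ℝ} (hu : ∑ i, u i ^ 2 ≤ R) (i : ι) : u i ^ 2 ≤ R :=
    (single_le_sum (fun j _ => sq_nonneg (u j)) (mem_univ i)).trans hu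
  calc ∑ i, (requ (z i) - requ (w i)) ^ 2 ≤ ∑ i, 2 * (z i ^ 2 + w i ^ 2) * (z i - w i) ^ 2 :=
        sum_le_sum fun i _ => sq_requ_sub_requ_le _ _
    _ ≤ ∑ i, 4 * R * (z i - w i) ^ 2 := sum_le_sum fun i _ =>
        mul_le_mul_of_nonneg_right (by linarith [hpt hz i, hpt hw i]) (sq_nonneg _)
    _ = 4 * R * ∑ i, (z i - w i) ^ 2 := (mul_sum ..).symm

end ReQU

section Bounds

variable (K d : ℝ)

/-- For `K = 2 C² n` and `d` the input dimension, a bound for `∑ i, (hiddenLayers … k x i) ^ 2`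
on the unit cube. -/
noncomputable def normSqBound (k : ℕ) : ℝ := K ^ (2 ^ (k + 1) - 2) * d ^ 2 ^ k

/-- For `K = 2 C² n`, the square of a Lipschitz constant of `hiddenLayers … k` on the unit
cube, from `ℓ¹` to `ℓ²`. -/
noncomputable def lipSqBound (k : ℕ) : ℝ := 2 ^ k * K ^ (2 ^ (k + 1) - 2) * d ^ (2 ^ k - 1)

lemma normSqBound_zero : normSqBound K d 0 = d := by simp [normSqBound]

lemma normSqBound_succ (k : ℕ) : normSqBound K d (k + 1) = (K * normSqBound K d k) ^ 2 := by
  have h2 : 2 ≤ 2 ^ (k + 1) := Nat.le_self_pow (Nat.succ_ne_zero k) 2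
  have hexp : 2 ^ (k + 1 + 1) - 2 = 2 + (2 ^ (k + 1) - 2) + (2 ^ (k + 1) - 2) := by
    rw [pow_succ _ (k + 1)]; omega
  rw [normSqBound, normSqBound, hexp, pow_succ _ k, pow_mul]
  ring

lemma lipSqBound_zero : lipSqBound K d 0 = 1 := by simp [lipSqBound]

lemma lipSqBound_succ (k : ℕ) :
    lipSqBound K d (k + 1) = 2 * K ^ 2 * normSqBound K d k * lipSqBound K d k := by
  have h2 : 2 ≤ 2 ^ (k + 1) := Nat.le_self_pow (Nat.succ_ne_zero k) 2
  have h1 : 1 ≤ 2 ^ k := Nat.one_le_two_pow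
  have hK : 2 ^ (k + 1 + 1) - 2 = 2 + (2 ^ (k + 1) - 2) + (2 ^ (k + 1) - 2) := by
    rw [pow_succ _ (k + 1)]; omega
  have hd : 2 ^ (k + 1) - 1 = 2 ^ k + (2 ^ k - 1) := by rw [pow_succ]; omega
  rw [lipSqBound, lipSqBound, normSqBound, hK, hd]
  ring

variable {K d}

lemma one_le_normSqBound (hK : 1 ≤ K) (hd : 1 ≤ d) (k : ℕ) : 1 ≤ normSqBound K d k :=
  one_le_mul_of_one_le_of_one_le (one_le_pow₀ hK) (one_le_pow₀ hd)

end Bounds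

section Network

variable {Nd : ℕ → ℕ} {A : (ℓ : ℕ) → Matrix (Fin (Nd (ℓ + 1))) (Fin (Nd ℓ)) ℝ}
  {b : (ℓ : ℕ) → Fin (Nd (ℓ + 1)) → ℝ} {C : ℝ} {n k : ℕ}

lemma sum_sq_le_of_mem_unitCube {ι : Type*} [Fintype ι] {x : ι → ℝ} (hx : x ∈ Set.Icc 0 1) :
    ∑ i, x i ^ 2 ≤ Fintype.card ι := by
  calc ∑ i, x i ^ 2 ≤ ∑ _i : ι, (1 : ℝ) := sum_le_sum fun i _ => pow_le_one₀ (hx.1 i) (hx.2 i)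
    _ = Fintype.card ι := by simp

lemma one_le_two_mul_sq_mul (hC : 1 ≤ C) (hn : 1 ≤ n) : 1 ≤ 2 * C ^ 2 * (n : ℝ) := by
  nlinarith [one_le_pow₀ (n := 2) hC, (Nat.one_le_cast.2 hn : (1 : ℝ) ≤ n)]

lemma sum_sq_hiddenLayers_le (hC : 1 ≤ C) (hn : 1 ≤ n) (hd : 1 ≤ Nd 0)
    (hw : ∀ ℓ < k, (∀ i j, |A ℓ i j| ≤ C) ∧ ∀ i, |b ℓ i| ≤ C)
    (hnnz : ∀ ℓ < k,
      #{p : Fin (Nd (ℓ + 1)) × Fin (Nd ℓ) | A ℓ p.1 p.2 ≠ 0} + #{i | b ℓ i ≠ 0} ≤ n)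
    {x : Fin (Nd 0) → ℝ} (hx : x ∈ Set.Icc 0 1) :
    ∑ i, hiddenLayers Nd A b k x i ^ 2 ≤ normSqBound (2 * C ^ 2 * n) (Nd 0) k := by
  have hK := one_le_two_mul_sq_mul hC hn
  induction k with
  | zero => simpa [hiddenLayers, normSqBound_zero] using sum_sq_le_of_mem_unitCube hx
  | succ k ih =>
    have hS := ih (fun ℓ hℓ => hw ℓ (hℓ.trans k.lt_succ_self))
      (fun ℓ hℓ => hnnz ℓ (hℓ.trans k.lt_succ_self))
    have hz := sum_sq_mulVec_add_le (hw k k.lt_succ_self).1 (hw k k.lt_succ_self).2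
      (hnnz k k.lt_succ_self) (one_le_normSqBound hK (by exact_mod_cast hd) k) hS
    calc ∑ i, hiddenLayers Nd A b (k + 1) x i ^ 2
        ≤ (∑ i, ((A k *ᵥ hiddenLayers Nd A b k x) i + b k i) ^ 2) ^ 2 := sum_sq_requ_le _
      _ ≤ (2 * C ^ 2 * n * normSqBound (2 * C ^ 2 * n) (Nd 0) k) ^ 2 := by gcongr
      _ = normSqBound (2 * C ^ 2 * n) (Nd 0) (k + 1) := (normSqBound_succ _ _ k).symm

lemma sum_sq_hiddenLayers_sub_le (hC : 1 ≤ C) (hn : 1 ≤ n) (hd : 1 ≤ Nd 0)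
    (hw : ∀ ℓ < k, (∀ i j, |A ℓ i j| ≤ C) ∧ ∀ i, |b ℓ i| ≤ C)
    (hnnz : ∀ ℓ < k,
      #{p : Fin (Nd (ℓ + 1)) × Fin (Nd ℓ) | A ℓ p.1 p.2 ≠ 0} + #{i | b ℓ i ≠ 0} ≤ n)
    {x y : Fin (Nd 0) → ℝ} (hx : x ∈ Set.Icc 0 1) (hy : y ∈ Set.Icc 0 1) :
    ∑ i, (hiddenLayers Nd A b k x i - hiddenLayers Nd A b k y i) ^ 2 ≤
      lipSqBound (2 * C ^ 2 * n) (Nd 0) k * (∑ j, |x j - y j|) ^ 2 := by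
  have hK := one_le_two_mul_sq_mul hC hn
  induction k with
  | zero =>
    simpa [hiddenLayers, lipSqBound_zero, sq_abs] using
      sum_sq_le_sq_sum_of_nonneg (s := univ) (f := fun j => |x j - y j|) fun j _ => abs_nonneg _
  | succ k ih =>
    have hw' : ∀ ℓ < k, (∀ i j, |A ℓ i j| ≤ C) ∧ ∀ i, |b ℓ i| ≤ C :=
      fun ℓ hℓ => hw ℓ (hℓ.trans k.lt_succ_self)
    have hnnz' : ∀ ℓ < k,
        #{p : Fin (Nd (ℓ + 1)) × Fin (Nd ℓ) | A ℓ p.1 p.2 ≠ 0} + #{i | b ℓ i ≠ 0} ≤ n :=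
      fun ℓ hℓ => hnnz ℓ (hℓ.trans k.lt_succ_self)
    set S := normSqBound (2 * C ^ 2 * n) (Nd 0) k
    have hS : 1 ≤ S := one_le_normSqBound hK (by exact_mod_cast hd) k
    have hpre {v} (hv : v ∈ Set.Icc 0 1) :=
      sum_sq_mulVec_add_le (hw k k.lt_succ_self).1 (hw k k.lt_succ_self).2
        (hnnz k k.lt_succ_self) hS (sum_sq_hiddenLayers_le hC hn hd hw' hnnz' hv)
    have hlin : ∑ i, ((A k *ᵥ hiddenLayers Nd A b k x) i + b k i
          - ((A k *ᵥ hiddenLayers Nd A b k y) i + b k i)) ^ 2 ≤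
        C ^ 2 * n * ∑ j, (hiddenLayers Nd A b k x j - hiddenLayers Nd A b k y j) ^ 2 := by
      simpa [mulVec_sub] using sum_sq_mulVec_le_of_card_le (hw k k.lt_succ_self).1
        ((Nat.le_add_right _ _).trans (hnnz k k.lt_succ_self))
        (hiddenLayers Nd A b k x - hiddenLayers Nd A b k y)
    calc ∑ i, (hiddenLayers Nd A b (k + 1) x i - hiddenLayers Nd A b (k + 1) y i) ^ 2
        ≤ 4 * (2 * C ^ 2 * n * S) * (C ^ 2 * n *
            ∑ j, (hiddenLayers Nd A b k x j - hiddenLayers Nd A b k y j) ^ 2) :=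
          (sum_sq_requ_sub_requ_le (hpre hx) (hpre hy)).trans
            (mul_le_mul_of_nonneg_left hlin (by positivity))
      _ ≤ 4 * (2 * C ^ 2 * n * S) * (C ^ 2 * n *
            (lipSqBound (2 * C ^ 2 * n) (Nd 0) k * (∑ j, |x j - y j|) ^ 2)) := by
          gcongr
          exact ih hw' hnnz'
      _ = lipSqBound (2 * C ^ 2 * n) (Nd 0) (k + 1) * (∑ j, |x j - y j|) ^ 2 := by
          rw [lipSqBound_succ]; ring

end Network

lemma sq_realize_sub_realize_le {Nd : ℕ → ℕ}
    {A : (ℓ : ℕ) → Matrix (Fin (Nd (ℓ + 1))) (Fin (Nd ℓ)) ℝ} (b : (ℓ : ℕ) → Fin (Nd (ℓ + 1)) → ℝ)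
    {C : ℝ} {n L' : ℕ} (hA : ∀ i j, |A L' i j| ≤ C)
    (hnnz : #{p : Fin (Nd (L' + 1)) × Fin (Nd L') | A L' p.1 p.2 ≠ 0} ≤ n)
    (x y : Fin (Nd 0) → ℝ) (i : Fin (Nd (L' + 1))) :
    (realize Nd A b L' x i - realize Nd A b L' y i) ^ 2 ≤
      C ^ 2 * n * ∑ j, (hiddenLayers Nd A b L' x j - hiddenLayers Nd A b L' y j) ^ 2 := by
  have hdiff : realize Nd A b L' x i - realize Nd A b L' y i =
      (A L' *ᵥ (hiddenLayers Nd A b L' x - hiddenLayers Nd A b L' y)) i := by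
    simp only [realize, mulVec_sub, Pi.sub_apply]; ring
  rw [hdiff]
  exact (single_le_sum (fun i' _ => sq_nonneg _) (mem_univ i)).trans
    (sum_sq_mulVec_le_of_card_le hA hnnz _)

lemma rpow_two_pow_sub_one_div_two_sq {a : ℝ} (ha : 0 ≤ a) (m : ℕ) :
    (a ^ (((2 : ℝ) ^ m - 1) / 2)) ^ 2 = a ^ (2 ^ m - 1) := by
  rw [← Real.rpow_natCast _ 2, ← Real.rpow_mul ha, ← Real.rpow_natCast a (2 ^ m - 1)]
  push_cast [Nat.one_le_two_pow]
  ring_nf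

lemma sq_mul_lipSqBound_le {C : ℝ} {n d L L' : ℕ} (hC : 1 ≤ C) (hn : 1 ≤ n) (hd : 1 ≤ d)
    (hL : L' + 1 ≤ L) :
    C ^ 2 * n * lipSqBound (2 * C ^ 2 * n) d L' ≤
      (2 ^ (2 ^ L + L - 3) * (d : ℝ) ^ (((2 : ℝ) ^ (L - 1) - 1) / 2) *
        C ^ (2 ^ L - 1) * (n : ℝ) ^ (((2 : ℝ) ^ L - 1) / 2)) ^ 2 := by
  have hd1 : (1 : ℝ) ≤ d := Nat.one_le_cast.2 hd
  have hn1 : (1 : ℝ) ≤ n := Nat.one_le_cast.2 hn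
  have hL1 : 2 ^ (L' + 1) ≤ 2 ^ L := Nat.pow_le_pow_right two_pos hL
  have hL2 : 2 ^ L' ≤ 2 ^ (L - 1) := Nat.pow_le_pow_right two_pos (by omega)
  have h2 : 2 ≤ 2 ^ (L' + 1) := Nat.le_self_pow (Nat.succ_ne_zero L') 2
  calc C ^ 2 * n * lipSqBound (2 * C ^ 2 * n) d L'
      = 2 ^ (L' + (2 ^ (L' + 1) - 2)) * (d : ℝ) ^ (2 ^ L' - 1) *
          C ^ (2 * (2 ^ (L' + 1) - 2) + 2) * (n : ℝ) ^ ((2 ^ (L' + 1) - 2) + 1) := by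
        rw [lipSqBound]; ring
    _ ≤ 2 ^ (2 * (2 ^ L + L - 3)) * (d : ℝ) ^ (2 ^ (L - 1) - 1) * C ^ (2 * (2 ^ L - 1)) *
          (n : ℝ) ^ (2 ^ L - 1) := by
        gcongr <;> first | omega | norm_num
    _ = _ := by
        rw [mul_pow, mul_pow, mul_pow, rpow_two_pow_sub_one_div_two_sq (by positivity),
          rpow_two_pow_sub_one_div_two_sq (by positivity), ← pow_mul, ← pow_mul]
        ring

lemma sum_le_card_mul_iSup {ι : Type*} [Fintype ι] (f : ι → ℝ) :
    ∑ i, f i ≤ Fintype.card ι * ⨆ i, f i := by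
  simpa using sum_le_card_nsmul univ f _ fun i _ => le_ciSup (Set.finite_range f).bddAbove i

open Classical in
theorem stmt15_general (d n L : ℕ) (C : ℝ) (hC : 1 ≤ C)
    (Nd : ℕ → ℕ) (A : (ℓ : ℕ) → Matrix (Fin (Nd (ℓ + 1))) (Fin (Nd ℓ)) ℝ)
    (b : (ℓ : ℕ) → Fin (Nd (ℓ + 1)) → ℝ)
    (L' : ℕ) (hL : L' + 1 ≤ L)
    (hN0 : Nd 0 = d)
    (hw : ∀ ℓ ≤ L', (∀ i j, |A ℓ i j| ≤ C) ∧ (∀ i, |b ℓ i| ≤ C))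
    (hn : ∑ ℓ ∈ Finset.range (L' + 1),
        ((Finset.univ.filter
            (fun p : Fin (Nd (ℓ + 1)) × Fin (Nd ℓ) => A ℓ p.1 p.2 ≠ 0)).card
          + (Finset.univ.filter (fun i : Fin (Nd (ℓ + 1)) => b ℓ i ≠ 0)).card) ≤ n) :
    ∀ x y : Fin (Nd 0) → ℝ, x ∈ Set.Icc 0 1 → y ∈ Set.Icc 0 1 →
      ∀ i : Fin (Nd (L' + 1)),
      (|realize Nd A b L' x i - realize Nd A b L' y i| ≤
        2 ^ (2 ^ L + L - 3) * (d : ℝ) ^ (((2 : ℝ) ^ (L - 1) - 1) / 2) *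
          C ^ (2 ^ L - 1) * (n : ℝ) ^ (((2 : ℝ) ^ L - 1) / 2) *
          (∑ j, |x j - y j|)) ∧
      (|realize Nd A b L' x i - realize Nd A b L' y i| ≤
        (d : ℝ) * (2 ^ (2 ^ L + L - 3) * (d : ℝ) ^ (((2 : ℝ) ^ (L - 1) - 1) / 2) *
          C ^ (2 ^ L - 1) * (n : ℝ) ^ (((2 : ℝ) ^ L - 1) / 2)) *
          (⨆ j, |x j - y j|)) := by
  subst hN0
  intro x y hx hy i
  set Q : ℝ := 2 ^ (2 ^ L + L - 3) * (Nd 0 : ℝ) ^ (((2 : ℝ) ^ (L - 1) - 1) / 2) *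
    C ^ (2 ^ L - 1) * (n : ℝ) ^ (((2 : ℝ) ^ L - 1) / 2)
  have hQ : 0 ≤ Q := by positivity
  suffices h : |realize Nd A b L' x i - realize Nd A b L' y i| ≤ Q * ∑ j, |x j - y j| by
    refine ⟨h, h.trans ?_⟩
    simpa [mul_assoc, mul_left_comm _ Q] using
      mul_le_mul_of_nonneg_left (sum_le_card_mul_iSup fun j => |x j - y j|) hQ
  have hnnz : ∀ ℓ ≤ L', #{p : Fin (Nd (ℓ + 1)) × Fin (Nd ℓ) | A ℓ p.1 p.2 ≠ 0}
      + #{i | b ℓ i ≠ 0} ≤ n := fun ℓ hℓ =>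
    (single_le_sum (fun _ _ => Nat.zero_le _) (mem_range.2 (Nat.lt_succ_of_le hℓ))).trans hn
  have hlast := sq_realize_sub_realize_le b (hw L' le_rfl).1
    ((Nat.le_add_right _ _).trans (hnnz L' le_rfl)) x y i
  rcases Nat.eq_zero_or_pos n with rfl | hn1
  · have : realize Nd A b L' x i - realize Nd A b L' y i = 0 := by simpa using hlast
    rw [this, abs_zero]; positivity
  rcases Nat.eq_zero_or_pos (Nd 0) with hd | hd
  · obtain rfl : x = y := funext fun j => absurd j.isLt (by omega)
    simp
  have hhidden := sum_sq_hiddenLayers_sub_le hC hn1 hd (fun ℓ hℓ => hw ℓ hℓ.le)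
    (fun ℓ hℓ => hnnz ℓ hℓ.le) hx hy
  refine abs_le_of_sq_le_sq ?_ (by positivity)
  calc (realize Nd A b L' x i - realize Nd A b L' y i) ^ 2
      ≤ C ^ 2 * n * (lipSqBound (2 * C ^ 2 * n) (Nd 0) L' * (∑ j, |x j - y j|) ^ 2) :=
        hlast.trans (by gcongr)
    _ ≤ Q ^ 2 * (∑ j, |x j - y j|) ^ 2 := by
        rw [← mul_assoc]; gcongr; exact sq_mul_lipSqBound_le hC hn1 hd hL
    _ = (Q * ∑ j, |x j - y j|) ^ 2 := by ring

open Classical in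
theorem stmt15 (d n L : ℕ) (C : ℝ) (hC : 1 ≤ C)
    (Nd : ℕ → ℕ) (A : (ℓ : ℕ) → Matrix (Fin (Nd (ℓ + 1))) (Fin (Nd ℓ)) ℝ)
    (b : (ℓ : ℕ) → Fin (Nd (ℓ + 1)) → ℝ)
    (L' : ℕ) (hL : L' + 1 ≤ L)
    (hN0 : Nd 0 = d) (hNL : Nd (L' + 1) = 1)
    (hw : ∀ ℓ ≤ L', (∀ i j, |A ℓ i j| ≤ C) ∧ (∀ i, |b ℓ i| ≤ C))
    (hn : ∑ ℓ ∈ Finset.range (L' + 1),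
        ((Finset.univ.filter
            (fun p : Fin (Nd (ℓ + 1)) × Fin (Nd ℓ) => A ℓ p.1 p.2 ≠ 0)).card
          + (Finset.univ.filter (fun i : Fin (Nd (ℓ + 1)) => b ℓ i ≠ 0)).card) ≤ n) :
    ∀ x y : Fin (Nd 0) → ℝ, x ∈ Set.Icc 0 1 → y ∈ Set.Icc 0 1 →
      ∀ i : Fin (Nd (L' + 1)),
      (|realize Nd A b L' x i - realize Nd A b L' y i| ≤
        2 ^ (2 ^ L + L - 3) * (d : ℝ) ^ (((2 : ℝ) ^ (L - 1) - 1) / 2) *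
          C ^ (2 ^ L - 1) * (n : ℝ) ^ (((2 : ℝ) ^ L - 1) / 2) *
          (∑ j, |x j - y j|)) ∧
      (|realize Nd A b L' x i - realize Nd A b L' y i| ≤
        (d : ℝ) * (2 ^ (2 ^ L + L - 3) * (d : ℝ) ^ (((2 : ℝ) ^ (L - 1) - 1) / 2) *
          C ^ (2 ^ L - 1) * (n : ℝ) ^ (((2 : ℝ) ^ L - 1) / 2)) *
          (⨆ j, |x j - y j|)) :=
  stmt15_general d n L C hC Nd A b L' hL hN0 hw hn
end
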